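/- Let d,g,h,t≥1 and r≥0 be integers, let G be a (K_{2,2},K_t)-free graph, let Z⊆V(G) with |Z|≤h, and let Z0={z1,z2,z}⊆Z be a 3-clique such that the neighbors of z inside Z are exactly z1 and z2. Let p=(Z0,…,Z_r;Γ_i : i∈[r]) be a (Z0, d+g+2^h·t, r)-phantom in G such that Z_r∩Z=Z0. Then one of the following holds: (a) there exists a (z1,z2,1,g)-crystal c in the induced subgraph G[Z_r] such that V(c) is anticomplete to Z∖Z0; or (b) G has a subgraph U isomorphic to T_{d,r} such that z is the root of U, the set {z1,z2} is disjoint from V(U) and complete to V(U) in G, and for every i∈[r], every vertex u∈V(U) at distance i from z in U with parent u⁻ in U satisfies u∈Γ_i(u⁻z1)∪Γ_i(u⁻z2)⊆Z_i∖Z_{i−1} (in particular V(U)∩Z={z}). -/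

import Mathlib

/-- `G` is `H`-free: no induced subgraph of `G` is isomorphic to `H`. -/
def Free {V W : Type} (G : SimpleGraph V) (H : SimpleGraph W) : Prop :=
  IsEmpty (H ↪g G)

/-- A graph is chordal if it has no induced cycle on at least four vertices. -/
def Chordal {V : Type} (G : SimpleGraph V) : Prop :=
  ∀ n : ℕ, 4 ≤ n → IsEmpty (SimpleGraph.cycleGraph n ↪g G)

/-- A graph is even-hole-free if it has no induced cycle on an even number (at least four)
of vertices. -/
def EvenHoleFree {V : Type} (G : SimpleGraph V) : Prop :=
  ∀ n : ℕ, 4 ≤ n → Even n → IsEmpty (SimpleGraph.cycleGraph n ↪g G)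

/-- `cone F` is obtained from `F` by adding a universal vertex (the vertex `none`). -/
def cone {V : Type} (F : SimpleGraph V) : SimpleGraph (Option V) :=
  SimpleGraph.fromRel (fun u v => u = none ∨ ∃ a b, u = some a ∧ v = some b ∧ F.Adj a b)
/-- `(Z, Γ)` is a `(Z0, d, r)`-phantom in `G`:  `Z0 = Z 0 ⊆ Z 1 ⊆ ⋯ ⊆ Z r`, and for each
`i ∈ [r]` and each edge `uv` of `G[Z (i-1)]`, `Γ i s(u,v)` is a `d`-element subset of
`Z i \ Z (i-1)` complete to `{u, v}`, these sets being pairwise disjoint over distinct edges. -/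
def IsPhantom {V : Type} (G : SimpleGraph V) (Z0 : Set V) (d r : ℕ)
    (Z : ℕ → Set V) (Γ : ℕ → Sym2 V → Set V) : Prop :=
  Z 0 = Z0 ∧
  (∀ i, i < r → Z i ⊆ Z (i + 1)) ∧
  (∀ i, i < r → ∀ u v : V, G.Adj u v → u ∈ Z i → v ∈ Z i →
    (Γ (i + 1) s(u, v)).Finite ∧ (Γ (i + 1) s(u, v)).ncard = d ∧
    Γ (i + 1) s(u, v) ⊆ Z (i + 1) \ Z i ∧
    ∀ x ∈ Γ (i + 1) s(u, v), G.Adj u x ∧ G.Adj v x) ∧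
  (∀ i, i < r → ∀ u v u' v' : V, G.Adj u v → u ∈ Z i → v ∈ Z i →
    G.Adj u' v' → u' ∈ Z i → v' ∈ Z i → s(u, v) ≠ s(u', v') →
    Γ (i + 1) s(u, v) ∩ Γ (i + 1) s(u', v') = ∅)
/-- `(S, S1, S2)` is a `(z1, z2, f, g)`-crystal in `G`. -/
structure IsCrystalIn {V : Type} (G : SimpleGraph V) (z1 z2 : V) (f g : ℕ)
    (S : Finset V) (S1 S2 : V → Finset V) : Prop where
  adj : G.Adj z1 z2
  cardS : S.card = f
  z1_not_mem : z1 ∉ S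
  z2_not_mem : z2 ∉ S
  card1 : ∀ z ∈ S, (S1 z).card = g
  card2 : ∀ z ∈ S, (S2 z).card = g
  avoid1 : ∀ z ∈ S, ∀ x ∈ S1 z, x ∉ S ∧ x ≠ z1 ∧ x ≠ z2
  avoid2 : ∀ z ∈ S, ∀ x ∈ S2 z, x ∉ S ∧ x ≠ z1 ∧ x ≠ z2
  disj11 : ∀ z ∈ S, ∀ z' ∈ S, z ≠ z' → Disjoint (S1 z) (S1 z')
  disj22 : ∀ z ∈ S, ∀ z' ∈ S, z ≠ z' → Disjoint (S2 z) (S2 z')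
  disj12 : ∀ z ∈ S, ∀ z' ∈ S, Disjoint (S1 z) (S2 z')
  adj1 : ∀ z ∈ S, ∀ x ∈ S1 z, G.Adj x z1 ∧ G.Adj x z ∧ ¬ G.Adj x z2
  adj2 : ∀ z ∈ S, ∀ x ∈ S2 z, G.Adj x z2 ∧ G.Adj x z ∧ ¬ G.Adj x z1

/-- The vertex set `V(c)` of a crystal `(S, S1, S2)`. -/
def crystalVerts {V : Type} (S : Finset V) (S1 S2 : V → Finset V) : Set V :=
  ↑S ∪ (⋃ z ∈ S, (↑(S1 z) : Set V)) ∪ (⋃ z ∈ S, (↑(S2 z) : Set V))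
/-- Vertices of the tree `T_{d,r}`: sequences over `Fin d` of length at most `r`. -/
abbrev TdrVert (d r : ℕ) : Type := {l : List (Fin d) // l.length ≤ r}

/-- The tree `T_{d,r}` of radius `r` whose root (the empty list) has degree `d` and in which
every vertex that is neither the root nor a leaf has degree `d+1`. -/
def Tdr (d r : ℕ) : SimpleGraph (TdrVert d r) :=
  SimpleGraph.fromRel
    (fun u v => ∃ a : Fin d, (v : List (Fin d)) = a :: (u : List (Fin d)))

/-! Grow the tree greedily from `z`. Call `x` a clean apex if it is adjacent to `z1` and `z2` and
has no neighbour in `Y = Z \ Z0`; a clean apex `w` of level `i` takes as children `d` clean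
apexes of `Γ_{i+1}(wz1) ∪ Γ_{i+1}(wz2)`. These lie in the new layer `Z_{i+1} \ Z_i`, and the
`Γ`-sets of distinct edges are disjoint, so the tree is embedded.

If some `w` has fewer than `d` candidate children, look at `A = Γ_{i+1}(wz1)`, of size
`d + g + 2^h t`. For `v ∈ Y`, the neighbours of `v` in `A` are pairwise adjacent, since two
nonadjacent ones would induce a `C_4` with `w` and `v`; hence `K_t`-freeness leaves fewer than `t`
of them, and at most `2^h t` vertices of `A` have a neighbour in `Y`. Fewer than `d` of the
remaining ones see `z2`, so `g` of them are clean and miss `z2`. The same holds in `Γ_{i+1}(wz2)`,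
and together with `w` these give the crystal. -/

open Finset Function

variable {V : Type}

theorem Finset.card_lt_of_isEmpty_embedding {T : Finset V} {C : Set V} {d : ℕ} (hT : ↑T ⊆ C)
    (h : IsEmpty (Fin d ↪ C)) : #T < d := by
  by_contra! hd
  obtain ⟨e⟩ := Function.Embedding.nonempty_of_card_le (α := Fin d) (β := (T : Set V))
    (by simpa using hd)
  exact h.false (e.trans (Set.embeddingOfSubset _ _ hT))

section Graph

variable {G : SimpleGraph V}

theorem Free.isClique_commonNeighbors (hK22 : Free G (completeBipartiteGraph (Fin 2) (Fin 2)))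
    {w v : V} (hne : w ≠ v) (hwv : ¬ G.Adj w v) : G.IsClique (G.commonNeighbors w v) := by
  intro x hx y hy hxy
  rw [SimpleGraph.mem_commonNeighbors] at hx hy
  obtain ⟨hwx, hvx⟩ := hx
  obtain ⟨hwy, hvy⟩ := hy
  by_contra hnxy
  have := hwx.ne; have := hwy.ne; have := hvx.ne; have := hvy.ne
  have := hwx.symm; have := hwy.symm; have := hvx.symm; have := hvy.symm
  have : ¬ G.Adj v w := fun h => hwv h.symm
  have : ¬ G.Adj y x := fun h => hnxy h.symm
  let f : Fin 2 ⊕ Fin 2 → V := Sum.elim ![w, v] ![x, y]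
  have hf : Injective f := by
    rintro (a | a) (b | b) hab <;> fin_cases a <;> fin_cases b <;> simp_all [f]
  refine hK22.false ⟨⟨f, hf⟩, fun {a b} => ?_⟩
  change G.Adj (f a) (f b) ↔ _
  rcases a with a | a <;> rcases b with b | b <;> fin_cases a <;> fin_cases b <;>
    simp_all [f, completeBipartiteGraph]

theorem Free.cliqueFree {t : ℕ} (hKt : Free G (⊤ : SimpleGraph (Fin t))) : G.CliqueFree t :=
  SimpleGraph.cliqueFree_iff.mpr ⟨fun f => hKt.false f.topEmbedding⟩

theorem SimpleGraph.IsClique.card_lt_of_cliqueFree {s : Finset V} {t : ℕ}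
    (hs : G.IsClique (s : Set V)) (ht : G.CliqueFree t) : #s < t := by
  by_contra! h
  obtain ⟨u, hus, rfl⟩ := exists_subset_card_eq h
  exact ht u ⟨hs.subset (by simpa using hus), rfl⟩

open Classical

variable {t : ℕ}

theorem card_filter_adj_lt (hK22 : Free G (completeBipartiteGraph (Fin 2) (Fin 2)))
    (hKt : G.CliqueFree t) {w v : V} (hne : w ≠ v) (hwv : ¬ G.Adj w v) {A : Finset V}
    (hA : ∀ x ∈ A, G.Adj w x) : #{x ∈ A | G.Adj x v} < t := by
  refine SimpleGraph.IsClique.card_lt_of_cliqueFree ?_ hKt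
  refine (hK22.isClique_commonNeighbors hne hwv).subset fun x hx => ?_
  rw [coe_filter] at hx
  exact ⟨hA x hx.1, hx.2.symm⟩

theorem card_filter_not_disjoint_neighborSet_le
    (hK22 : Free G (completeBipartiteGraph (Fin 2) (Fin 2))) (hKt : G.CliqueFree t)
    {Y : Set V} (hY : Y.Finite) {w : V} (hwY : w ∉ Y) (hw : Disjoint (G.neighborSet w) Y)
    {A : Finset V} (hA : ∀ x ∈ A, G.Adj w x) :
    #{x ∈ A | ¬ Disjoint (G.neighborSet x) Y} ≤ Y.ncard * t := by
  calc #{x ∈ A | ¬ Disjoint (G.neighborSet x) Y}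
      ≤ #(hY.toFinset.biUnion fun v => {x ∈ A | G.Adj x v}) := by
        refine card_le_card fun x hx => ?_
        rw [mem_filter, Set.not_disjoint_iff] at hx
        obtain ⟨hxA, v, hxv, hv⟩ := hx
        exact mem_biUnion.2 ⟨v, hY.mem_toFinset.2 hv, mem_filter.2 ⟨hxA, hxv⟩⟩
    _ ≤ Y.ncard * t := by
        rw [Set.ncard_eq_toFinset_card Y hY]
        refine card_biUnion_le_card_mul _ _ _ fun v hv => (card_filter_adj_lt hK22 hKt ?_ ?_ hA).le
        · rintro rfl
          exact hwY (hY.mem_toFinset.1 hv)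
        · exact fun h => Set.disjoint_left.1 hw h (hY.mem_toFinset.1 hv)

theorem exists_subset_disjoint_neighborSet_not_adj
    (hK22 : Free G (completeBipartiteGraph (Fin 2) (Fin 2))) (hKt : G.CliqueFree t)
    {Y : Set V} (hY : Y.Finite) {w : V} (hwY : w ∉ Y) (hw : Disjoint (G.neighborSet w) Y)
    {A : Finset V} (hA : ∀ x ∈ A, G.Adj w x) {d g : ℕ} (y : V) (hcard : d + g + Y.ncard * t ≤ #A)
    (hfew : #{x ∈ A | Disjoint (G.neighborSet x) Y ∧ G.Adj y x} < d) :
    ∃ S ⊆ A, #S = g ∧ ∀ x ∈ S, Disjoint (G.neighborSet x) Y ∧ ¬ G.Adj y x := by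
  have hdirty := card_filter_not_disjoint_neighborSet_le hK22 hKt hY hwY hw hA
  have hsplit := card_filter_add_card_filter_not (s := A) (fun x => Disjoint (G.neighborSet x) Y)
  have hsplit' := card_filter_add_card_filter_not
    (s := {x ∈ A | Disjoint (G.neighborSet x) Y}) (fun x => G.Adj y x)
  rw [filter_filter, filter_filter] at hsplit'
  obtain ⟨S, hS, hSg⟩ := exists_subset_card_eq
    (s := {x ∈ A | Disjoint (G.neighborSet x) Y ∧ ¬ G.Adj y x}) (n := g) (by omega)
  exact ⟨S, hS.trans (filter_subset _ _), hSg, fun x hx => (mem_filter.1 (hS hx)).2⟩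

end Graph

section Crystal

variable {G : SimpleGraph V}

theorem isCrystalIn_singleton {z1 z2 w : V} {g : ℕ} {S1 S2 : Finset V} (h12 : G.Adj z1 z2)
    (hw1 : w ≠ z1) (hw2 : w ≠ z2) (hS1 : #S1 = g) (hS2 : #S2 = g) (hz2 : z2 ∉ S1)
    (hz1 : z1 ∉ S2) (hS12 : Disjoint S1 S2)
    (hadj1 : ∀ x ∈ S1, G.Adj x z1 ∧ G.Adj x w ∧ ¬ G.Adj x z2)
    (hadj2 : ∀ x ∈ S2, G.Adj x z2 ∧ G.Adj x w ∧ ¬ G.Adj x z1) :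
    IsCrystalIn G z1 z2 1 g {w} (fun _ => S1) (fun _ => S2) where
  adj := h12
  cardS := card_singleton w
  z1_not_mem := by simpa using hw1.symm
  z2_not_mem := by simpa using hw2.symm
  card1 _ _ := hS1
  card2 _ _ := hS2
  avoid1 _ _ x hx := ⟨by simpa using (hadj1 x hx).2.1.ne, (hadj1 x hx).1.ne,
    fun h => hz2 (h ▸ hx)⟩
  avoid2 _ _ x hx := ⟨by simpa using (hadj2 x hx).2.1.ne, fun h => hz1 (h ▸ hx),
    (hadj2 x hx).1.ne⟩
  disj11 _ h _ h' hne := absurd ((mem_singleton.1 h).trans (mem_singleton.1 h').symm) hne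
  disj22 _ h _ h' hne := absurd ((mem_singleton.1 h).trans (mem_singleton.1 h').symm) hne
  disj12 _ _ _ _ := hS12
  adj1 _ h := mem_singleton.1 h ▸ hadj1
  adj2 _ h := mem_singleton.1 h ▸ hadj2

theorem crystalVerts_singleton (w : V) (S1 S2 : Finset V) :
    crystalVerts {w} (fun _ => S1) (fun _ => S2) = insert w (↑S1 ∪ ↑S2) := by
  ext x
  simp [crystalVerts, or_assoc]

end Crystal

section Tree

variable {d r : ℕ}

theorem exists_tree_of_forall_embedding (P : ℕ → V → Prop) (C : ℕ → V → Set V) {z : V}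
    (hz : P 0 z) (hPC : ∀ i < r, ∀ w, P i w → ∀ x ∈ C i w, P (i + 1) x)
    (hC : ∀ i < r, ∀ w, P i w → Nonempty (Fin d ↪ C i w)) :
    ∃ u : List (Fin d) → V, u [] = z ∧ (∀ l : List (Fin d), l.length ≤ r → P l.length (u l)) ∧
      ∀ l : List (Fin d), l.length < r →
        Injective (fun a => u (a :: l)) ∧ ∀ a, u (a :: l) ∈ C l.length (u l) := by
  have hchoice : ∀ i w, ∃ f : Fin d → V, i < r → P i w → Injective f ∧ ∀ a, f a ∈ C i w := by
    intro i w
    by_cases h : i < r ∧ P i w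
    · obtain ⟨e⟩ := hC i h.1 w h.2
      exact ⟨fun a => e a, fun _ _ => ⟨Subtype.val_injective.comp e.injective, fun a => (e a).2⟩⟩
    · exact ⟨fun _ => z, fun hi hw => absurd ⟨hi, hw⟩ h⟩
  choose F hF using hchoice
  let u : List (Fin d) → V := fun l => l.rec z fun a l w => F l.length w a
  have hP : ∀ l : List (Fin d), l.length ≤ r → P l.length (u l) := by
    intro l hl
    induction l with
    | nil => exact hz
    | cons a l ih =>
      have hl' : l.length < r := by simpa using hl
      exact hPC _ hl' _ (ih hl'.le) _ ((hF _ _ hl' (ih hl'.le)).2 a)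
  exact ⟨u, rfl, hP, fun l hl => hF _ _ hl (hP l hl.le)⟩

theorem injOn_of_layered {α : Type} {u : List α → V} {Zs : ℕ → Set V}
    (hmono : ∀ i j, i ≤ j → j ≤ r → Zs i ⊆ Zs j)
    (hmem : ∀ l : List α, l.length ≤ r → u l ∈ Zs l.length)
    (hnew : ∀ a (l : List α), l.length < r → u (a :: l) ∉ Zs l.length)
    (hsib : ∀ l : List α, l.length < r → Injective fun a => u (a :: l))
    (hcousin : ∀ a b (l l' : List α), l.length = l'.length → l.length < r → u l ≠ u l' →
      u (a :: l) ≠ u (b :: l')) :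
    Set.InjOn u {l | l.length ≤ r} := by
  have hlt : ∀ l l' : List α, l.length < l'.length → l'.length ≤ r → u l ≠ u l' := by
    rintro l (_ | ⟨b, m⟩) hll' hl' heq
    · simp at hll'
    · simp only [List.length_cons] at hll' hl'
      exact hnew b m (by omega) (heq ▸ hmono _ _ (by omega) (by omega) (hmem l (by omega)))
  intro l hl l' hl' heq
  have hlen : l.length = l'.length := by
    by_contra hne
    rcases Nat.lt_or_gt_of_ne hne with h | h
    exacts [hlt l l' h hl' heq, hlt l' l h hl heq.symm]
  induction l generalizing l' with
  | nil => exact (List.length_eq_zero_iff.1 hlen.symm).symm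
  | cons a m ih =>
    obtain _ | ⟨b, m'⟩ := l'
    · simp at hlen
    change m.length + 1 ≤ r at hl
    change m'.length + 1 ≤ r at hl'
    simp only [List.length_cons, Nat.add_right_cancel_iff] at hlen
    have hm : m = m' := by
      by_contra hmm
      exact hcousin a b m m' hlen (by omega)
        (fun h => hmm (ih (by change _ ≤ r; omega) (by change _ ≤ r; omega) h hlen)) heq
    subst hm
    rw [hsib m (by omega) heq]

def Tdr.homOfAdj {G : SimpleGraph V} (u : List (Fin d) → V)
    (hu : ∀ a (l : List (Fin d)), l.length < r → G.Adj (u l) (u (a :: l))) : Tdr d r →g G where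
  toFun ℓ := u ℓ
  map_rel' := by
    rintro ℓ ℓ' ⟨-, ⟨a, ha⟩ | ⟨a, ha⟩⟩
    · have := ℓ'.2
      simp only [ha, List.length_cons] at this
      simpa [ha] using hu a ℓ (by omega)
    · have := ℓ.2
      simp only [ha, List.length_cons] at this
      simpa [ha] using (hu a ℓ' (by omega)).symm

end Tree

namespace IsPhantom

variable {G : SimpleGraph V} {Z0 : Set V} {N r i : ℕ} {Zs : ℕ → Set V} {Γ : ℕ → Sym2 V → Set V}

theorem mono (hp : IsPhantom G Z0 N r Zs Γ) {i j : ℕ} (hij : i ≤ j) (hj : j ≤ r) :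
    Zs i ⊆ Zs j := by
  induction j, hij using Nat.le_induction with
  | base => exact subset_rfl
  | succ j _ ih => exact (ih (by omega)).trans (hp.2.1 j (by omega))

theorem base_subset (hp : IsPhantom G Z0 N r Zs Γ) (hi : i ≤ r) : Z0 ⊆ Zs i :=
  hp.1 ▸ hp.mono (Nat.zero_le i) hi

theorem finite_Γ (hp : IsPhantom G Z0 N r Zs Γ) (hi : i < r) {u v : V} (huv : G.Adj u v)
    (hu : u ∈ Zs i) (hv : v ∈ Zs i) : (Γ (i + 1) s(u, v)).Finite :=
  (hp.2.2.1 i hi u v huv hu hv).1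

theorem ncard_Γ (hp : IsPhantom G Z0 N r Zs Γ) (hi : i < r) {u v : V} (huv : G.Adj u v)
    (hu : u ∈ Zs i) (hv : v ∈ Zs i) : (Γ (i + 1) s(u, v)).ncard = N :=
  (hp.2.2.1 i hi u v huv hu hv).2.1

theorem Γ_subset (hp : IsPhantom G Z0 N r Zs Γ) (hi : i < r) {u v : V} (huv : G.Adj u v)
    (hu : u ∈ Zs i) (hv : v ∈ Zs i) : Γ (i + 1) s(u, v) ⊆ Zs (i + 1) \ Zs i :=
  (hp.2.2.1 i hi u v huv hu hv).2.2.1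

theorem adj_of_mem_Γ (hp : IsPhantom G Z0 N r Zs Γ) (hi : i < r) {u v : V} (huv : G.Adj u v)
    (hu : u ∈ Zs i) (hv : v ∈ Zs i) {x : V} (hx : x ∈ Γ (i + 1) s(u, v)) :
    G.Adj u x ∧ G.Adj v x :=
  (hp.2.2.1 i hi u v huv hu hv).2.2.2 x hx

theorem disjoint_Γ (hp : IsPhantom G Z0 N r Zs Γ) (hi : i < r) {u v u' v' : V}
    (huv : G.Adj u v) (hu : u ∈ Zs i) (hv : v ∈ Zs i) (hu'v' : G.Adj u' v') (hu' : u' ∈ Zs i)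
    (hv' : v' ∈ Zs i) (hne : s(u, v) ≠ s(u', v')) :
    Disjoint (Γ (i + 1) s(u, v)) (Γ (i + 1) s(u', v')) :=
  Set.disjoint_iff_inter_eq_empty.2 (hp.2.2.2 i hi u v u' v' huv hu hv hu'v' hu' hv' hne)

variable {Z : Set V}

theorem notMem_diff (hp : IsPhantom G Z0 N r Zs Γ) (hcap : Zs r ∩ Z ⊆ Z0) (hi : i ≤ r) {x : V}
    (hx : x ∈ Zs i) : x ∉ Z \ Z0 :=
  fun hxZ => hxZ.2 (hcap ⟨hp.mono hi le_rfl hx, hxZ.1⟩)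

theorem notMem_of_mem_layer (hp : IsPhantom G Z0 N r Zs Γ) (hcap : Zs r ∩ Z ⊆ Z0) (hi : i < r)
    {x : V} (hx : x ∈ Zs (i + 1) \ Zs i) : x ∉ Z :=
  fun hxZ => hx.2 (hp.base_subset hi.le (hcap ⟨hp.mono hi le_rfl hx.1, hxZ⟩))

end IsPhantom

section DoubleCone

variable {G : SimpleGraph V} {Z0 Y : Set V} {N r i : ℕ} {Zs : ℕ → Set V}
  {Γ : ℕ → Sym2 V → Set V} {z1 z2 w : V}

def IsCleanApex (G : SimpleGraph V) (Y : Set V) (z1 z2 x : V) : Prop :=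
  G.Adj z1 x ∧ G.Adj z2 x ∧ Disjoint (G.neighborSet x) Y

def goodChildren (G : SimpleGraph V) (Y : Set V) (Γ : ℕ → Sym2 V → Set V) (z1 z2 : V) (i : ℕ)
    (w : V) : Set V :=
  {x | x ∈ Γ (i + 1) s(w, z1) ∪ Γ (i + 1) s(w, z2) ∧ IsCleanApex G Y z1 z2 x}

theorem isCleanApex_comm {x : V} : IsCleanApex G Y z1 z2 x ↔ IsCleanApex G Y z2 z1 x :=
  and_left_comm

theorem goodChildren_comm : goodChildren G Y Γ z1 z2 i w = goodChildren G Y Γ z2 z1 i w := by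
  simp only [goodChildren, Set.union_comm, isCleanApex_comm]

theorem union_Γ_subset (hp : IsPhantom G Z0 N r Zs Γ) (hz1 : z1 ∈ Z0) (hz2 : z2 ∈ Z0)
    (hi : i < r) (hw : w ∈ Zs i) (hw1 : G.Adj z1 w) (hw2 : G.Adj z2 w) :
    Γ (i + 1) s(w, z1) ∪ Γ (i + 1) s(w, z2) ⊆ Zs (i + 1) \ Zs i :=
  Set.union_subset (hp.Γ_subset hi hw1.symm hw (hp.base_subset hi.le hz1))
    (hp.Γ_subset hi hw2.symm hw (hp.base_subset hi.le hz2))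

theorem mem_layer_of_mem_goodChildren (hp : IsPhantom G Z0 N r Zs Γ) (hz1 : z1 ∈ Z0)
    (hz2 : z2 ∈ Z0) (hi : i < r) (hw : w ∈ Zs i) (hwa : IsCleanApex G Y z1 z2 w) {x : V}
    (hx : x ∈ goodChildren G Y Γ z1 z2 i w) : x ∈ Zs (i + 1) \ Zs i ∧ G.Adj w x := by
  refine ⟨union_Γ_subset hp hz1 hz2 hi hw hwa.1 hwa.2.1 hx.1, ?_⟩
  rcases hx.1 with hx | hx
  exacts [(hp.adj_of_mem_Γ hi hwa.1.symm hw (hp.base_subset hi.le hz1) hx).1,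
    (hp.adj_of_mem_Γ hi hwa.2.1.symm hw (hp.base_subset hi.le hz2) hx).1]

theorem disjoint_goodChildren (hp : IsPhantom G Z0 N r Zs Γ) (hz1 : z1 ∈ Z0) (hz2 : z2 ∈ Z0)
    (hi : i < r) {w' : V} (hw : w ∈ Zs i) (hw' : w' ∈ Zs i) (hwa : IsCleanApex G Y z1 z2 w)
    (hwa' : IsCleanApex G Y z1 z2 w') (hne : w ≠ w') :
    Disjoint (goodChildren G Y Γ z1 z2 i w) (goodChildren G Y Γ z1 z2 i w') := by
  have hΓ : ∀ y ∈ ({z1, z2} : Set V), ∀ y' ∈ ({z1, z2} : Set V),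
      Disjoint (Γ (i + 1) s(w, y)) (Γ (i + 1) s(w', y')) := by
    have hZ := hp.base_subset hi.le
    rintro y hy y' hy'
    refine hp.disjoint_Γ hi ?_ hw ?_ ?_ hw' ?_ fun h => ?_
    · rcases hy with rfl | rfl
      exacts [hwa.1.symm, hwa.2.1.symm]
    · rcases hy with rfl | rfl
      exacts [hZ hz1, hZ hz2]
    · rcases hy' with rfl | rfl
      exacts [hwa'.1.symm, hwa'.2.1.symm]
    · rcases hy' with rfl | rfl
      exacts [hZ hz1, hZ hz2]
    · rcases Sym2.eq_iff.1 h with ⟨h, -⟩ | ⟨rfl, -⟩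
      · exact hne h
      · rcases hy' with rfl | rfl
        exacts [hwa.1.ne rfl, hwa.2.1.ne rfl]
  have h1 : z1 ∈ ({z1, z2} : Set V) := Set.mem_insert _ _
  have h2 : z2 ∈ ({z1, z2} : Set V) := Set.mem_insert_of_mem _ rfl
  refine Disjoint.mono (fun x hx => hx.1) (fun x hx => hx.1) ?_
  simp only [Set.disjoint_union_left, Set.disjoint_union_right]
  exact ⟨⟨hΓ _ h1 _ h1, hΓ _ h2 _ h1⟩, hΓ _ h1 _ h2, hΓ _ h2 _ h2⟩

variable {t d g : ℕ}

open Classical in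
theorem exists_subset_Γ_of_isEmpty_embedding
    (hK22 : Free G (completeBipartiteGraph (Fin 2) (Fin 2))) (hKt : G.CliqueFree t)
    (hp : IsPhantom G Z0 N r Zs Γ) (hY : Y.Finite) (hN : d + g + Y.ncard * t ≤ N)
    (hz1 : z1 ∈ Z0) (hi : i < r) (hw : w ∈ Zs i) (hwY : w ∉ Y) (hwa : IsCleanApex G Y z1 z2 w)
    (hpoor : IsEmpty (Fin d ↪ goodChildren G Y Γ z1 z2 i w)) :
    ∃ S : Finset V, #S = g ∧
      ∀ x ∈ S, x ∈ Γ (i + 1) s(w, z1) ∧ Disjoint (G.neighborSet x) Y ∧ ¬ G.Adj z2 x := by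
  have hz1i := hp.base_subset hi.le hz1
  have hfin := hp.finite_Γ hi hwa.1.symm hw hz1i
  have hA : ∀ x ∈ hfin.toFinset, G.Adj w x ∧ G.Adj z1 x := fun x hx =>
    hp.adj_of_mem_Γ hi hwa.1.symm hw hz1i (hfin.mem_toFinset.1 hx)
  have hcard : #hfin.toFinset = N := by
    rw [← Set.ncard_eq_toFinset_card _ hfin, hp.ncard_Γ hi hwa.1.symm hw hz1i]
  have hfew : #{x ∈ hfin.toFinset | Disjoint (G.neighborSet x) Y ∧ G.Adj z2 x} < d := by
    refine card_lt_of_isEmpty_embedding (fun x hx => ?_) hpoor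
    rw [coe_filter] at hx
    exact ⟨Or.inl (hfin.mem_toFinset.1 hx.1), (hA x hx.1).2, hx.2.2, hx.2.1⟩
  obtain ⟨S, hSA, hSg, hS⟩ := exists_subset_disjoint_neighborSet_not_adj hK22 hKt hY hwY hwa.2.2
    (fun x hx => (hA x hx).1) z2 (hcard ▸ hN) hfew
  exact ⟨S, hSg, fun x hx => ⟨hfin.mem_toFinset.1 (hSA hx), hS x hx⟩⟩

theorem exists_crystal_of_isEmpty_embedding
    (hK22 : Free G (completeBipartiteGraph (Fin 2) (Fin 2))) (hKt : G.CliqueFree t)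
    (hp : IsPhantom G Z0 N r Zs Γ) (hY : Y.Finite) (hN : d + g + Y.ncard * t ≤ N)
    (h12 : G.Adj z1 z2) (hz1 : z1 ∈ Z0) (hz2 : z2 ∈ Z0) (hi : i < r) (hw : w ∈ Zs i)
    (hwY : w ∉ Y) (hwa : IsCleanApex G Y z1 z2 w)
    (hpoor : IsEmpty (Fin d ↪ goodChildren G Y Γ z1 z2 i w)) :
    ∃ (S : Finset V) (S1 S2 : V → Finset V), IsCrystalIn G z1 z2 1 g S S1 S2 ∧
      crystalVerts S S1 S2 ⊆ Zs r ∧ ∀ u ∈ crystalVerts S S1 S2, ∀ v ∈ Y, ¬ G.Adj u v := by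
  obtain ⟨S1, hS1g, hS1⟩ :=
    exists_subset_Γ_of_isEmpty_embedding hK22 hKt hp hY hN hz1 hi hw hwY hwa hpoor
  obtain ⟨S2, hS2g, hS2⟩ := exists_subset_Γ_of_isEmpty_embedding hK22 hKt hp hY hN hz2 hi hw hwY
    (isCleanApex_comm.1 hwa) (goodChildren_comm (G := G) ▸ hpoor)
  have hz1i := hp.base_subset hi.le hz1
  have hz2i := hp.base_subset hi.le hz2
  have hΓ1 : ∀ x ∈ S1, x ∈ Zs (i + 1) \ Zs i ∧ G.Adj w x ∧ G.Adj z1 x := fun x hx =>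
    ⟨hp.Γ_subset hi hwa.1.symm hw hz1i (hS1 x hx).1,
      hp.adj_of_mem_Γ hi hwa.1.symm hw hz1i (hS1 x hx).1⟩
  have hΓ2 : ∀ x ∈ S2, x ∈ Zs (i + 1) \ Zs i ∧ G.Adj w x ∧ G.Adj z2 x := fun x hx =>
    ⟨hp.Γ_subset hi hwa.2.1.symm hw hz2i (hS2 x hx).1,
      hp.adj_of_mem_Γ hi hwa.2.1.symm hw hz2i (hS2 x hx).1⟩
  have hS12 : Disjoint S1 S2 := Finset.disjoint_left.2 fun x h1 h2 =>
    Set.disjoint_left.1 (hp.disjoint_Γ hi hwa.1.symm hw hz1i hwa.2.1.symm hw hz2i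
      fun h => h12.ne (Sym2.congr_right.1 h)) (hS1 x h1).1 (hS2 x h2).1
  refine ⟨{w}, _, _, isCrystalIn_singleton h12 hwa.1.ne' hwa.2.1.ne' hS1g hS2g
    (fun h => (hΓ1 _ h).1.2 hz2i) (fun h => (hΓ2 _ h).1.2 hz1i) hS12
    (fun x hx => ⟨(hΓ1 x hx).2.2.symm, (hΓ1 x hx).2.1.symm, fun h => (hS1 x hx).2.2 h.symm⟩)
    (fun x hx => ⟨(hΓ2 x hx).2.2.symm, (hΓ2 x hx).2.1.symm, fun h => (hS2 x hx).2.2 h.symm⟩),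
    ?_, ?_⟩ <;> rw [crystalVerts_singleton]
  · refine Set.insert_subset (hp.mono hi.le le_rfl hw) (Set.union_subset ?_ ?_) <;>
      intro x hx
    exacts [hp.mono hi le_rfl (hΓ1 x hx).1.1, hp.mono hi le_rfl (hΓ2 x hx).1.1]
  · rintro x (rfl | hx | hx) v hv hxv
    exacts [Set.disjoint_left.1 hwa.2.2 hxv hv, Set.disjoint_left.1 (hS1 x hx).2.1 hxv hv,
      Set.disjoint_left.1 (hS2 x hx).2.1 hxv hv]

theorem exists_doubleCone_of_forall_embedding {Z : Set V} {z : V}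
    (hp : IsPhantom G Z0 N r Zs Γ) (hcap : Zs r ∩ Z ⊆ Z0) (hz1 : z1 ∈ Z0) (hz2 : z2 ∈ Z0)
    (hz : z ∈ Z0) (hzZ : z ∈ Z) (hza : IsCleanApex G (Z \ Z0) z1 z2 z)
    (hrich : ∀ i < r, ∀ w, w ∈ Zs i ∧ IsCleanApex G (Z \ Z0) z1 z2 w →
      Nonempty (Fin d ↪ goodChildren G (Z \ Z0) Γ z1 z2 i w)) :
    ∃ u : Tdr d r →g G, Function.Injective u ∧
      u ⟨[], by simp⟩ = z ∧
      (∀ ℓ : TdrVert d r, u ℓ ≠ z1 ∧ u ℓ ≠ z2 ∧ G.Adj z1 (u ℓ) ∧ G.Adj z2 (u ℓ)) ∧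
      (∀ ℓ ℓp : TdrVert d r, ∀ a : Fin d, (ℓ : List (Fin d)) = a :: (ℓp : List (Fin d)) →
        u ℓ ∈ Γ ((ℓp : List (Fin d)).length + 1) s(u ℓp, z1) ∪
              Γ ((ℓp : List (Fin d)).length + 1) s(u ℓp, z2) ∧
        Γ ((ℓp : List (Fin d)).length + 1) s(u ℓp, z1) ∪
          Γ ((ℓp : List (Fin d)).length + 1) s(u ℓp, z2) ⊆
            Zs ((ℓp : List (Fin d)).length + 1) \ Zs ((ℓp : List (Fin d)).length)) ∧
      Set.range u ∩ Z = {z} := by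
  obtain ⟨u, hroot, hP, hchild⟩ := exists_tree_of_forall_embedding
    (fun i w => w ∈ Zs i ∧ IsCleanApex G (Z \ Z0) z1 z2 w) (goodChildren G (Z \ Z0) Γ z1 z2)
    ⟨hp.base_subset (Nat.zero_le r) hz, hza⟩
    (fun i hi w hw x hx => ⟨(mem_layer_of_mem_goodChildren hp hz1 hz2 hi hw.1 hw.2 hx).1.1, hx.2⟩)
    hrich
  have hlayer : ∀ a (l : List (Fin d)), l.length < r →
      u (a :: l) ∈ Zs (l.length + 1) \ Zs l.length ∧ G.Adj (u l) (u (a :: l)) := fun a l hl =>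
    mem_layer_of_mem_goodChildren hp hz1 hz2 hl (hP l hl.le).1 (hP l hl.le).2 ((hchild l hl).2 a)
  have hcousin : ∀ a b (l l' : List (Fin d)), l.length = l'.length → l.length < r →
      u l ≠ u l' → u (a :: l) ≠ u (b :: l') := by
    intro a b l l' hll' hl hne heq
    have hl' : l'.length < r := hll' ▸ hl
    refine Set.disjoint_left.1 (disjoint_goodChildren hp hz1 hz2 hl (hP l hl.le).1
      (hll' ▸ (hP l' hl'.le).1) (hP l hl.le).2 (hP l' hl'.le).2 hne) ((hchild l hl).2 a) ?_
    rw [heq, hll']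
    exact (hchild l' hl').2 b
  have hinj : Set.InjOn u {l | l.length ≤ r} :=
    injOn_of_layered (fun _ _ => hp.mono) (fun l hl => (hP l hl).1)
      (fun a l hl => (hlayer a l hl).1.2) (fun l hl => (hchild l hl).1) hcousin
  refine ⟨Tdr.homOfAdj u fun a l hl => (hlayer a l hl).2, fun ℓ ℓ' h => Subtype.ext
    (hinj ℓ.2 ℓ'.2 h), hroot, fun ℓ => ?_, fun ℓ ℓp a hℓ => ?_, ?_⟩
  · obtain ⟨-, h1, h2, -⟩ := hP ℓ ℓ.2
    exact ⟨h1.ne', h2.ne', h1, h2⟩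
  · have hl : ℓp.1.length < r := by simpa [hℓ] using ℓ.2
    refine ⟨?_, union_Γ_subset hp hz1 hz2 hl (hP _ hl.le).1 (hP _ hl.le).2.1 (hP _ hl.le).2.2.1⟩
    change u ℓ.1 ∈ _
    rw [hℓ]
    exact ((hchild _ hl).2 a).1
  · ext v
    constructor
    · rintro ⟨⟨⟨_ | ⟨a, l⟩, hl⟩, rfl⟩, hvZ⟩
      · exact hroot
      · exact absurd hvZ (hp.notMem_of_mem_layer hcap hl (hlayer a l hl).1)
    · rintro rfl
      exact ⟨⟨⟨[], by simp⟩, hroot⟩, hzZ⟩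

end DoubleCone

/-- Theorem 4.1 (phantom-to-double-cone): given a `(Z0, d+g+2^h·t, r)`-phantom on the
3-clique `Z0 = {z1, z2, z}` in a `(K_{2,2}, K_t)`-free graph `G` with `Z_r ∩ Z = Z0`, either
there is a `(z1, z2, 1, g)`-crystal in `G[Z_r]` anticomplete to `Z \ Z0`, or `G` has a
subgraph `U` isomorphic to `T_{d,r}` rooted at `z`, with `{z1, z2}` disjoint from and
complete to `V(U)`, whose vertices at distance `i` from `z` lie in
`Γ_i(u⁻z1) ∪ Γ_i(u⁻z2) ⊆ Z_i \ Z_{i-1}` (`u⁻` the parent); in particular `V(U) ∩ Z = {z}`. -/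
theorem stmt9 (d g h t : ℕ) (r : ℕ)
    {V : Type} (G : SimpleGraph V)
    (hK22 : Free G (completeBipartiteGraph (Fin 2) (Fin 2)))
    (hKt : Free G (⊤ : SimpleGraph (Fin t)))
    (Z : Set V) (hZfin : Z.Finite) (hZcard : Z.ncard ≤ h)
    (z1 z2 z : V) (hZ0sub : {z1, z2, z} ⊆ Z)
    (hZ0clique : G.IsClique {z1, z2, z}) (hZ0card : ({z1, z2, z} : Set V).ncard = 3)
    (hNz : ∀ y ∈ Z, G.Adj z y ↔ y = z1 ∨ y = z2)
    (Zs : ℕ → Set V) (Γ : ℕ → Sym2 V → Set V)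
    (hp : IsPhantom G {z1, z2, z} (d + g + 2 ^ h * t) r Zs Γ)
    (hcap : Zs r ∩ Z = {z1, z2, z}) :
    (∃ (S : Finset V) (S1 S2 : V → Finset V),
      IsCrystalIn G z1 z2 1 g S S1 S2 ∧ crystalVerts S S1 S2 ⊆ Zs r ∧
      ∀ u ∈ crystalVerts S S1 S2, ∀ v ∈ Z \ {z1, z2, z}, ¬ G.Adj u v) ∨
    (∃ u : Tdr d r →g G, Function.Injective u ∧
      u ⟨[], by simp⟩ = z ∧
      (∀ ℓ : TdrVert d r, u ℓ ≠ z1 ∧ u ℓ ≠ z2 ∧ G.Adj z1 (u ℓ) ∧ G.Adj z2 (u ℓ)) ∧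
      (∀ ℓ ℓp : TdrVert d r, ∀ a : Fin d, (ℓ : List (Fin d)) = a :: (ℓp : List (Fin d)) →
        u ℓ ∈ Γ ((ℓp : List (Fin d)).length + 1) s(u ℓp, z1) ∪
              Γ ((ℓp : List (Fin d)).length + 1) s(u ℓp, z2) ∧
        Γ ((ℓp : List (Fin d)).length + 1) s(u ℓp, z1) ∪
          Γ ((ℓp : List (Fin d)).length + 1) s(u ℓp, z2) ⊆
            Zs ((ℓp : List (Fin d)).length + 1) \ Zs ((ℓp : List (Fin d)).length)) ∧
      Set.range u ∩ Z = {z}) := by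
  have h12 : z1 ≠ z2 := by
    rintro rfl
    have : ({z1, z1, z} : Set V).ncard ≤ 2 := by
      simpa using (Set.ncard_insert_le z1 {z}).trans (by simp)
    omega
  have hza : IsCleanApex G (Z \ {z1, z2, z}) z1 z2 z := by
    refine ⟨((hNz z1 (hZ0sub (by simp))).2 (Or.inl rfl)).symm,
      ((hNz z2 (hZ0sub (by simp))).2 (Or.inr rfl)).symm,
      Set.disjoint_left.2 fun v hzv hv => hv.2 ?_⟩
    rcases (hNz v hv.1).1 hzv with rfl | rfl <;> simp
  by_cases hrich : ∀ i < r, ∀ w, w ∈ Zs i ∧ IsCleanApex G (Z \ {z1, z2, z}) z1 z2 w →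
      Nonempty (Fin d ↪ goodChildren G (Z \ {z1, z2, z}) Γ z1 z2 i w)
  · exact Or.inr (exists_doubleCone_of_forall_embedding hp hcap.subset (by simp) (by simp)
      (by simp) (hZ0sub (by simp)) hza hrich)
  · push Not at hrich
    obtain ⟨i, hi, w, ⟨hw, hwa⟩, hpoor⟩ := hrich
    have hN : d + g + (Z \ {z1, z2, z}).ncard * t ≤ d + g + 2 ^ h * t := by
      have := Set.ncard_le_ncard (Set.sdiff_subset (t := {z1, z2, z})) hZfin
      have := (Nat.lt_two_pow_self (n := h)).le
      gcongr
      omega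
    exact Or.inl (exists_crystal_of_isEmpty_embedding hK22 hKt.cliqueFree hp hZfin.sdiff hN
      (hZ0clique (by simp) (by simp) h12) (by simp) (by simp) hi hw
      (hp.notMem_diff hcap.subset hi.le hw) hwa hpoor)
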